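/- Let X and V be complex Hilbert spaces with X separable, and let A : X → X* be a positive linear operator with factorization A = S*TS, where S : X → V is compact and injective and T : V → V is bounded and coercive on Range(S). For ℓ ∈ X* and α > 0, let x_α = Σ_n (λ_n/(α λ_n + λ_n²)) conj(⟨x_n, ℓ⟩_{X×X*}) x_n, the unique minimizer of the functional J_α(ℓ; x) = α ⟨x, Ax⟩_{X×X*} + ‖Ax − ℓ‖²_{X*}. Then x_α coincides with the regularized solution of Ax = ℓ for the filter functions f_α(t) = t/(α + t), and ℓ ∈ Range(S*) if and only if liminf_{α→0} ⟨x_α, Ax_α⟩_{X×X*} < ∞. -/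

import Mathlib

open Complex InnerProductSpace Filter Topology ENNReal TopologicalSpace

noncomputable section

local notation "⟪" x ", " y "⟫" => @inner ℂ _ _ x y

/-- `X*`: the continuous dual of a complex Hilbert space `X`, modeled as the space of
continuous conjugate-linear functionals, so that the dual pairing
`⟨x, ℓ⟩_{X×X*} := conj (ℓ x)` is sesquilinear (linear in `x`, conjugate-linear in `ℓ`). -/
abbrev ADual (X : Type*) [NormedAddCommGroup X] [InnerProductSpace ℂ X] := X →L⋆[ℂ] ℂ

section defs
variable {X : Type*} [NormedAddCommGroup X] [InnerProductSpace ℂ X]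

/-- The sesquilinear dual pairing `⟨x, ℓ⟩_{X×X*}`. -/
def dpair (x : X) (ℓ : ADual X) : ℂ := starRingEnd ℂ (ℓ x)

variable [CompleteSpace X]

/-- `J : X* → X`, the Riesz isometry, determined by `(x, Jℓ)_X = ⟨x, ℓ⟩_{X×X*}`
(with the paper's inner product, linear in the first slot; in Mathlib's convention
this reads `⟪Jℓ, x⟫ = conj (ℓ x)` for all `x`). -/
def rieszJ (ℓ : ADual X) : X :=
  (InnerProductSpace.toDual ℂ X).symm
    { toFun := fun x => starRingEnd ℂ (ℓ x)
      map_add' := fun x y => by simp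
      map_smul' := fun c x => by simp [mul_comm]
      cont := continuous_star.comp ℓ.continuous }

/-- A bounded operator `A : X → X*` is positive if `⟨x, Ax⟩_{X×X*} > 0`
(i.e. it is a positive real number) for every `x ≠ 0`. -/
def IsPositiveOp (A : X →L[ℂ] ADual X) : Prop :=
  ∀ x : X, x ≠ 0 → 0 < (dpair x (A x)).re ∧ (dpair x (A x)).im = 0

/-- Spectral data `{λ_n; x_n; ℓ_n}` of a positive compact operator `A : X → X*`:
a nonincreasing sequence `λ_n > 0` tending to `0`, an orthonormal basis `x_n` of `X`
of eigenvectors of `JA` with `(JA)x_n = λ_n x_n`, and the dual basis `ℓ_n = J⁻¹x_n`. -/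
structure SpectralData (A : X →L[ℂ] ADual X) (lam : ℕ → ℝ) (e : ℕ → X)
    (l : ℕ → ADual X) : Prop where
  pos : ∀ n, 0 < lam n
  anti : Antitone lam
  tendsto_zero : Tendsto lam atTop (𝓝 0)
  orthonormal : Orthonormal ℂ e
  complete : (Submodule.span ℂ (Set.range e)).topologicalClosure = ⊤
  eig : ∀ n, rieszJ (A (e n)) = (lam n : ℂ) • e n
  dual_basis : ∀ n, rieszJ (l n) = e n

/-- A family of filter functions `f_α : (0, λ₁] → [0, ∞)`, `α > 0`, with
`f_α(t) → 1` as `α → 0` for every `t ∈ (0, λ₁]` and `f_α(t) ≤ C_reg`. -/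
def IsFilterFamily (lam : ℕ → ℝ) (Creg : ℝ) (f : ℝ → ℝ → ℝ) : Prop :=
  0 < Creg ∧
    (∀ t ∈ Set.Ioc (0 : ℝ) (lam 0), Tendsto (fun α => f α t) (𝓝[>] (0 : ℝ)) (𝓝 1)) ∧
    (∀ α > (0 : ℝ), ∀ t ∈ Set.Ioc (0 : ℝ) (lam 0), 0 ≤ f α t ∧ f α t ≤ Creg)

/-- `x_α`, the regularized solution of `Ax = ℓ` for the filter family `f`:
`x_α = Σ_n (f_α(λ_n)/λ_n) conj(⟨x_n, ℓ⟩) x_n`. -/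
def IsRegSolution (lam : ℕ → ℝ) (e : ℕ → X) (f : ℝ → ℝ → ℝ) (ℓ : ADual X)
    (xa : ℝ → X) : Prop :=
  ∀ α : ℝ, 0 < α →
    HasSum
      (fun n => (((f α (lam n) / lam n : ℝ) : ℂ) * starRingEnd ℂ (dpair (e n) ℓ)) • e n)
      (xa α)

end defs

section adj
variable {X V : Type*} [NormedAddCommGroup X] [InnerProductSpace ℂ X] [CompleteSpace X]
  [NormedAddCommGroup V] [InnerProductSpace ℂ V] [CompleteSpace V]

/-- The adjoint `S* : V → X*` of a bounded operator `S : X → V`, determined by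
`(Sx, v)_V = ⟨x, S*v⟩_{X×X*}` for all `x ∈ X`, `v ∈ V`. -/
def hadj (S : X →L[ℂ] V) : V →L[ℂ] ADual X :=
  LinearMap.mkContinuous
    { toFun := fun v =>
        { toFun := fun x => ⟪S x, v⟫
          map_add' := fun x y => by simp [inner_add_left]
          map_smul' := fun c x => by simp [inner_smul_left]; ring
          cont := (S.continuous.inner continuous_const) }
      map_add' := fun v w => by ext x; simp [inner_add_right]
      map_smul' := fun c v => by ext x; simp [inner_smul_right] }
    ‖S‖
    (fun v => by
      apply ContinuousLinearMap.opNorm_le_bound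
      · positivity
      · intro x
        calc ‖⟪S x, v⟫‖ ≤ ‖S x‖ * ‖v‖ := norm_inner_le_norm _ _
          _ ≤ (‖S‖ * ‖x‖) * ‖v‖ := by gcongr; exact S.le_opNorm x
          _ = ‖S‖ * ‖v‖ * ‖x‖ := by ring)

/-- A bounded operator `T : V → V` is coercive on the range of `S : X → V` if there is
`β > 0` with `β‖Sx‖² ≤ (Sx, TSx)_V` for all `x ∈ X`. -/
def CoerciveOnRange (S : X →L[ℂ] V) (T : V →L[ℂ] V) : Prop :=
  ∃ β : ℝ, 0 < β ∧ ∀ x : X, β * ‖S x‖ ^ 2 ≤ (⟪T (S x), S x⟫).re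

end adj

/-!
In the eigenbasis `(x_n)` of `JA` the minimizer `x_α` has coefficients `ℓ(x_n) / (α + λ_n)`,
which is also what the filter `t / (α + t)` produces, and
`⟨x_α, A x_α⟩ = Σ λ_n |ℓ(x_n)|² / (α + λ_n)²` increases, as `α ↓ 0`, to the Picard series
`Σ |ℓ(x_n)|² / λ_n`. It remains to see that the Picard series converges iff `ℓ ∈ Range(S*)`;
the factorization and the coercivity of `T` give `β ‖S z‖² ≤ ⟨z, A z⟩`. If `ℓ = S* v`, testing `ℓ`
on a truncation `z` of the formal solution `Σ ℓ(x_n) / λ_n • x_n` bounds the partial Picard sums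
by `‖S z‖ ‖v‖`, hence by `‖v‖² / β`. Conversely, if the Picard series converges, the images under
`S` of these truncations form a Cauchy series in `V`, with some limit `u`, and `ℓ = S* T u`.
-/

section dual
variable {X V : Type*} [NormedAddCommGroup X] [InnerProductSpace ℂ X]
  [NormedAddCommGroup V] [InnerProductSpace ℂ V]

@[simp]
lemma conj_dpair (x : X) (ℓ : ADual X) : starRingEnd ℂ (dpair x ℓ) = ℓ x :=
  Complex.conj_conj _

lemma hadj_apply (S : X →L[ℂ] V) (v : V) (x : X) : hadj S v x = ⟪S x, v⟫ := rfl

lemma dpair_hadj (S : X →L[ℂ] V) (x : X) (v : V) : dpair x (hadj S v) = ⟪v, S x⟫ :=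
  inner_conj_symm _ _

lemma exists_mul_norm_sq_le_dpair_re {A : X →L[ℂ] ADual X} {S : X →L[ℂ] V} {T : V →L[ℂ] V}
    (hAS : A = (hadj S).comp (T.comp S)) (hT : CoerciveOnRange S T) :
    ∃ β > 0, ∀ x, β * ‖S x‖ ^ 2 ≤ (dpair x (A x)).re := by
  obtain ⟨β, hβ, hcoer⟩ := hT
  refine ⟨β, hβ, fun x => ?_⟩
  simpa only [hAS, ContinuousLinearMap.comp_apply, dpair_hadj] using hcoer x

lemma apply_eq_inner_rieszJ [CompleteSpace X] (m : ADual X) (x : X) : m x = ⟪x, rieszJ m⟫ := by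
  rw [← inner_conj_symm, rieszJ, InnerProductSpace.toDual_symm_apply]
  simp

end dual

lemma HilbertBasis.inner_eq_of_hasSum {ι X : Type*} [NormedAddCommGroup X]
    [InnerProductSpace ℂ X] (b : HilbertBasis ι ℂ X) {c : ι → ℂ} {x : X}
    (h : HasSum (fun i => c i • b i) x) (i : ι) : ⟪b i, x⟫ = c i := by
  have hsingle : HasSum (fun j => ⟪b i, c j • b j⟫) ⟪b i, c i • b i⟫ :=
    hasSum_single i fun j hji => by
      rw [inner_smul_right, b.orthonormal.inner_eq_zero hji.symm, mul_zero]
  have hinner : HasSum (fun j => ⟪b i, c j • b j⟫) ⟪b i, x⟫ := (innerSL ℂ (b i)).hasSum h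
  rw [hinner.unique hsingle, inner_smul_right,
    inner_self_eq_one_of_norm_eq_one (b.orthonormal.norm_eq_one i), mul_one]

lemma summable_of_norm_sum_sq_le {ι E : Type*} [NormedAddCommGroup E] [CompleteSpace E]
    {g : ι → E} {a : ι → ℝ} (ha : Summable a) (h : ∀ s, ‖∑ i ∈ s, g i‖ ^ 2 ≤ ∑ i ∈ s, a i) :
    Summable g := by
  refine summable_iff_vanishing_norm.2 fun ε hε => ?_
  obtain ⟨s, hs⟩ := summable_iff_vanishing_norm.1 ha (ε ^ 2) (by positivity)
  refine ⟨s, fun t ht => lt_of_pow_lt_pow_left₀ 2 hε.le ?_⟩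
  calc ‖∑ i ∈ t, g i‖ ^ 2 ≤ ∑ i ∈ t, a i := h t
    _ ≤ ‖∑ i ∈ t, a i‖ := Real.le_norm_self _
    _ < ε ^ 2 := hs t ht

lemma tsum_ofReal_lt_top_iff {ι : Type*} {f : ι → ℝ} (hf : ∀ i, 0 ≤ f i) :
    ∑' i, ENNReal.ofReal (f i) < ⊤ ↔ Summable f := by
  refine ⟨fun h => ?_, Summable.tsum_ofReal_lt_top⟩
  exact (ENNReal.summable_toReal h.ne).congr fun i => ENNReal.toReal_ofReal (hf i)

lemma liminf_tsum_eq_tsum {α ι : Type*} {l : Filter α} [l.NeBot] {F : α → ι → ℝ≥0∞}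
    {G : ι → ℝ≥0∞} (hle : ∀ᶠ a in l, ∀ i, F a i ≤ G i)
    (hlim : ∀ i, Tendsto (fun a => F a i) l (𝓝 (G i))) :
    liminf (fun a => ∑' i, F a i) l = ∑' i, G i := by
  refine le_antisymm (liminf_le_of_frequently_le' ?_) ?_
  · exact (hle.mono fun a ha => ENNReal.tsum_le_tsum ha).frequently
  · rw [ENNReal.tsum_eq_iSup_sum]
    refine iSup_le fun s => ?_
    rw [← (tendsto_finsetSum s fun i _ => hlim i).liminf_eq]
    exact liminf_le_liminf (.of_forall fun a => ENNReal.sum_le_tsum s)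

section spectral
variable {ι X : Type*} [NormedAddCommGroup X] [InnerProductSpace ℂ X] [CompleteSpace X]
  (b : HilbertBasis ι ℂ X) {A : X →L[ℂ] ADual X} {lam : ι → ℝ}

lemma apply_basis_apply (hA : ∀ i, rieszJ (A (b i)) = (lam i : ℂ) • b i) (i : ι) (x : X) :
    A (b i) x = lam i * ⟪x, b i⟫ := by
  rw [apply_eq_inner_rieszJ, hA, inner_smul_right]

lemma hasSum_dpair_re (hA : ∀ i, rieszJ (A (b i)) = (lam i : ℂ) • b i) (x : X) :
    HasSum (fun i => lam i * ‖⟪b i, x⟫‖ ^ 2) (dpair x (A x)).re := by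
  have hAx : HasSum (fun i => ⟪b i, x⟫ • A (b i)) (A x) := by
    simpa only [map_smul, b.repr_apply_apply] using A.hasSum (b.hasSum_repr x)
  have hterm : ∀ i, (⟪b i, x⟫ • A (b i)) x = ((lam i * ‖⟪b i, x⟫‖ ^ 2 : ℝ) : ℂ) := by
    intro i
    rw [smul_apply, apply_basis_apply b hA, ← inner_conj_symm x (b i),
      smul_eq_mul, mul_left_comm, Complex.mul_conj, Complex.normSq_eq_norm_sq]
    push_cast; ring
  have h := (ContinuousLinearMap.apply' ℂ (starRingEnd ℂ) x).hasSum hAx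
  simp only [ContinuousLinearMap.apply_apply', hterm] at h
  simpa only [Complex.reCLM_apply, Complex.ofReal_re, dpair, Complex.conj_re] using
    Complex.reCLM.hasSum h

lemma hasSum_dpair_re_of_hasSum (hA : ∀ i, rieszJ (A (b i)) = (lam i : ℂ) • b i)
    {c : ι → ℂ} {x : X} (h : HasSum (fun i => c i • b i) x) :
    HasSum (fun i => lam i * ‖c i‖ ^ 2) (dpair x (A x)).re := by
  simpa only [b.inner_eq_of_hasSum h] using hasSum_dpair_re b hA x

lemma dpair_re_sum (hA : ∀ i, rieszJ (A (b i)) = (lam i : ℂ) • b i) (c : ι → ℂ)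
    (s : Finset ι) :
    (dpair (∑ i ∈ s, c i • b i) (A (∑ i ∈ s, c i • b i))).re = ∑ i ∈ s, lam i * ‖c i‖ ^ 2 := by
  classical
  set c' : ι → ℂ := fun i => if i ∈ s then c i else 0
  have hc' : ∀ i ∈ s, c' i = c i := fun i hi => if_pos hi
  have h : HasSum (fun i => c' i • b i) (∑ i ∈ s, c i • b i) := by
    have : HasSum (fun i => c' i • b i) (∑ i ∈ s, c' i • b i) :=
      hasSum_sum_of_ne_finset_zero fun i hi => by simp [c', hi]
    rwa [Finset.sum_congr rfl fun i hi => by rw [hc' i hi]] at this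
  have hfin : HasSum (fun i => lam i * ‖c' i‖ ^ 2) (∑ i ∈ s, lam i * ‖c' i‖ ^ 2) :=
    hasSum_sum_of_ne_finset_zero fun i hi => by simp [c', hi]
  rw [(hasSum_dpair_re_of_hasSum b hA h).unique hfin]
  exact Finset.sum_congr rfl fun i hi => by rw [hc' i hi]

lemma hasSum_dpair_re_of_hasSum_inv_add (hA : ∀ i, rieszJ (A (b i)) = (lam i : ℂ) • b i)
    {α : ℝ} (hα : ∀ i, 0 < α + lam i) {ℓ : ADual X} {x : X}
    (h : HasSum (fun i => ((((α + lam i)⁻¹ : ℝ) : ℂ) * ℓ (b i)) • b i) x) :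
    HasSum (fun i => lam i * ‖ℓ (b i)‖ ^ 2 / (α + lam i) ^ 2) (dpair x (A x)).re := by
  refine (hasSum_dpair_re_of_hasSum b hA h).congr_fun fun i => ?_
  rw [norm_mul, Complex.norm_real, norm_inv, Real.norm_of_nonneg (hα i).le]
  field_simp

end spectral

lemma mul_norm_div_ofReal_sq {t : ℝ} (ht : 0 < t) (w : ℂ) : t * ‖w / t‖ ^ 2 = ‖w‖ ^ 2 / t := by
  rw [norm_div, Complex.norm_real, Real.norm_of_nonneg ht.le]
  field_simp

lemma le_sq_div_of_le_mul {t s C β : ℝ} (hβ : 0 < β) (hts : t ≤ s * C)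
    (hst : β * s ^ 2 ≤ t) : t ≤ C ^ 2 / β := by
  rw [le_div_iff₀ hβ]
  nlinarith [sq_nonneg (β * s - C), sq_nonneg s]

section factorization
variable {ι X V : Type*} [NormedAddCommGroup X] [InnerProductSpace ℂ X] [CompleteSpace X]
  [NormedAddCommGroup V] [InnerProductSpace ℂ V]
  (b : HilbertBasis ι ℂ X) {A : X →L[ℂ] ADual X} {S : X →L[ℂ] V} {T : V →L[ℂ] V}
  {lam : ι → ℝ}

lemma summable_of_mem_range_hadj (hA : ∀ i, rieszJ (A (b i)) = (lam i : ℂ) • b i)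
    (hlam : ∀ i, 0 < lam i) (hAS : A = (hadj S).comp (T.comp S)) (hT : CoerciveOnRange S T)
    {ℓ : ADual X} (hℓ : ℓ ∈ Set.range (hadj S)) :
    Summable fun i => ‖ℓ (b i)‖ ^ 2 / lam i := by
  obtain ⟨β, hβ, hcoer⟩ := exists_mul_norm_sq_le_dpair_re hAS hT
  obtain ⟨v, rfl⟩ := hℓ
  refine summable_of_sum_le (c := ‖v‖ ^ 2 / β) (fun i => by have := hlam i; positivity)
    fun s => ?_
  set c : ι → ℂ := fun i => hadj S v (b i) / lam i
  set z := ∑ i ∈ s, c i • b i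
  have hℓz : hadj S v z = ((∑ i ∈ s, ‖hadj S v (b i)‖ ^ 2 / lam i : ℝ) : ℂ) := by
    simp only [z, map_sum, ContinuousLinearMap.map_smulₛₗ, c, map_div₀, Complex.conj_ofReal]
    push_cast
    refine Finset.sum_congr rfl fun i _ => ?_
    rw [smul_eq_mul, div_mul_eq_mul_div, mul_comm, Complex.mul_conj, Complex.normSq_eq_norm_sq]
    push_cast; ring
  refine le_sq_div_of_le_mul (s := ‖S z‖) hβ ?_ ?_
  · calc ∑ i ∈ s, ‖hadj S v (b i)‖ ^ 2 / lam i = ‖hadj S v z‖ := by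
          rw [hℓz, Complex.norm_real, Real.norm_of_nonneg
            (Finset.sum_nonneg fun i _ => by have := hlam i; positivity)]
      _ ≤ ‖S z‖ * ‖v‖ := by rw [hadj_apply]; exact norm_inner_le_norm _ _
  · calc β * ‖S z‖ ^ 2 ≤ (dpair z (A z)).re := hcoer z
      _ = ∑ i ∈ s, ‖hadj S v (b i)‖ ^ 2 / lam i := by
        simp only [z, c, dpair_re_sum b hA, mul_norm_div_ofReal_sq (hlam _)]

lemma mem_range_hadj_of_summable [CompleteSpace V]
    (hA : ∀ i, rieszJ (A (b i)) = (lam i : ℂ) • b i) (hlam : ∀ i, 0 < lam i)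
    (hAS : A = (hadj S).comp (T.comp S)) (hT : CoerciveOnRange S T)
    {ℓ : ADual X} (hℓ : Summable fun i => ‖ℓ (b i)‖ ^ 2 / lam i) :
    ℓ ∈ Set.range (hadj S) := by
  obtain ⟨β, hβ, hcoer⟩ := exists_mul_norm_sq_le_dpair_re hAS hT
  set c : ι → ℂ := fun i => ℓ (b i) / lam i
  -- the formal solution `∑ c i • b i` of `A x = ℓ` may diverge in `X`, but its image under `S`
  -- converges in `V`
  obtain ⟨u, hu⟩ : Summable fun i => c i • S (b i) := by
    refine summable_of_norm_sum_sq_le (hℓ.div_const β) fun s => ?_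
    rw [← Finset.sum_div, le_div_iff₀ hβ, mul_comm]
    simp only [← map_smul, ← map_sum]
    refine (hcoer _).trans (le_of_eq ?_)
    simp only [c, dpair_re_sum b hA, mul_norm_div_ofReal_sq (hlam _)]
  refine ⟨T u, ContinuousLinearMap.ext fun x => ?_⟩
  have hTu : HasSum (fun i => ℓ (b i) * ⟪x, b i⟫) ⟪S x, T u⟫ := by
    refine (((innerSL ℂ (S x)).comp T).hasSum hu).congr_fun fun i => ?_
    have hSTS : ⟪S x, T (S (b i))⟫ = lam i * ⟪x, b i⟫ := by
      rw [← apply_basis_apply b hA, hAS]; rfl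
    simp only [ContinuousLinearMap.comp_apply, map_smul, innerSL_apply_apply, smul_eq_mul,
      hSTS, c]
    field_simp [Complex.ofReal_ne_zero.mpr (hlam i).ne']
  have hℓx : HasSum (fun i => ℓ (b i) * ⟪x, b i⟫) (ℓ x) := by
    refine (ℓ.hasSum (b.hasSum_repr x)).congr_fun fun i => ?_
    rw [ContinuousLinearMap.map_smulₛₗ, b.repr_apply_apply, smul_eq_mul, inner_conj_symm,
      mul_comm]
  exact hTu.unique hℓx

lemma mem_range_hadj_iff_summable [CompleteSpace V]
    (hA : ∀ i, rieszJ (A (b i)) = (lam i : ℂ) • b i) (hlam : ∀ i, 0 < lam i)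
    (hAS : A = (hadj S).comp (T.comp S)) (hT : CoerciveOnRange S T) (ℓ : ADual X) :
    ℓ ∈ Set.range (hadj S) ↔ Summable fun i => ‖ℓ (b i)‖ ^ 2 / lam i :=
  ⟨summable_of_mem_range_hadj b hA hlam hAS hT, mem_range_hadj_of_summable b hA hlam hAS hT⟩

end factorization

lemma mul_div_add_sq_le {α t a : ℝ} (hα : 0 ≤ α) (ht : 0 < t) (ha : 0 ≤ a) :
    t * a / (α + t) ^ 2 ≤ a / t :=
  calc t * a / (α + t) ^ 2 ≤ t * a / t ^ 2 := by gcongr; linarith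
    _ = a / t := by field_simp

lemma tendsto_mul_div_add_sq {t : ℝ} (ht : t ≠ 0) (a : ℝ) :
    Tendsto (fun α : ℝ => t * a / (α + t) ^ 2) (𝓝 0) (𝓝 (a / t)) := by
  have h : Tendsto (fun α : ℝ => t * a / (α + t) ^ 2) (𝓝 0) (𝓝 (t * a / (0 + t) ^ 2)) :=
    tendsto_const_nhds.div ((tendsto_id.add tendsto_const_nhds).pow 2) (by simpa using ht)
  convert h using 2
  rw [zero_add]
  field_simp

theorem glsm_is_regularization_and_range_characterization_general
    {X V : Type*}
    [NormedAddCommGroup X] [InnerProductSpace ℂ X] [CompleteSpace X]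
    [NormedAddCommGroup V] [InnerProductSpace ℂ V] [CompleteSpace V]
    (A : X →L[ℂ] ADual X)
    (S : X →L[ℂ] V) (T : V →L[ℂ] V)
    (hAS : A = (hadj S).comp (T.comp S))
    (hT : CoerciveOnRange S T)
    (lam : ℕ → ℝ) (e : ℕ → X) (l : ℕ → ADual X)
    (hspec : SpectralData A lam e l)
    (ℓ : ADual X) (xa : ℝ → X)
    (hxa : ∀ α : ℝ, 0 < α →
      HasSum
        (fun n => (((lam n / (α * lam n + lam n ^ 2) : ℝ) : ℂ) *
          starRingEnd ℂ (dpair (e n) ℓ)) • e n) (xa α)) :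
    IsRegSolution lam e (fun α t => t / (α + t)) ℓ xa ∧
      (ℓ ∈ Set.range ⇑(hadj S) ↔
        Filter.liminf (fun α => ENNReal.ofReal ((dpair (xa α) (A (xa α))).re))
          (𝓝[>] (0 : ℝ)) < ⊤) := by
  obtain ⟨b, rfl⟩ : ∃ b : HilbertBasis ℕ ℂ X, ⇑b = e :=
    ⟨_, HilbertBasis.coe_mk hspec.orthonormal hspec.complete.ge⟩
  have hlam := hspec.pos
  -- both filters reduce to the coefficient `(α + λ_n)⁻¹` on the eigenvector `b n`
  have hxa' : ∀ α > 0, HasSum (fun n => ((((α + lam n)⁻¹ : ℝ) : ℂ) * ℓ (b n)) • b n) (xa α) :=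
    fun α hα => by
      simpa only [show ∀ n, α * lam n + lam n ^ 2 = lam n * (α + lam n) from fun n => by ring,
        div_mul_cancel_left₀ (hlam _).ne', conj_dpair] using hxa α hα
  refine ⟨fun α hα => ?_, ?_⟩
  · simpa only [div_div_cancel_left' (hlam _).ne', conj_dpair] using hxa' α hα
  have henergy : ∀ α > 0, ENNReal.ofReal (dpair (xa α) (A (xa α))).re
      = ∑' n, ENNReal.ofReal (lam n * ‖ℓ (b n)‖ ^ 2 / (α + lam n) ^ 2) := fun α hα => by
    have h := hasSum_dpair_re_of_hasSum_inv_add b hspec.eig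
      (fun n => by linarith [hlam n]) (hxa' α hα)
    rw [← h.tsum_eq, ENNReal.ofReal_tsum_of_nonneg (fun n => by have := hlam n; positivity)
      h.summable]
  rw [mem_range_hadj_iff_summable b hspec.eig hlam hAS hT,
    ← tsum_ofReal_lt_top_iff fun n => by have := hlam n; positivity,
    liminf_congr (eventually_nhdsWithin_of_forall (s := Set.Ioi 0) henergy), liminf_tsum_eq_tsum]
  · exact eventually_nhdsWithin_of_forall (s := Set.Ioi 0) fun α hα n =>
      ENNReal.ofReal_le_ofReal (mul_div_add_sq_le (le_of_lt hα) (hlam n) (sq_nonneg _))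
  · exact fun n => (ENNReal.continuous_ofReal.tendsto _).comp
      ((tendsto_mul_div_add_sq (hlam n).ne' _).mono_left nhdsWithin_le_nhds)

/-- With `A = S*TS` as in the Regularized Factorization Method and
`x_α = Σ_n (λ_n/(αλ_n + λ_n²)) conj(⟨x_n, ℓ⟩) x_n` (the GLSM minimizer), `x_α` is
the regularized solution of `Ax = ℓ` for the filter functions `f_α(t) = t/(α + t)`,
and `ℓ ∈ Range(S*)` iff `liminf_{α→0} ⟨x_α, Ax_α⟩ < ∞`. -/
theorem glsm_is_regularization_and_range_characterization
    {X V : Type*}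
    [NormedAddCommGroup X] [InnerProductSpace ℂ X] [CompleteSpace X] [SeparableSpace X]
    [NormedAddCommGroup V] [InnerProductSpace ℂ V] [CompleteSpace V]
    (A : X →L[ℂ] ADual X) (hpos : IsPositiveOp A)
    (S : X →L[ℂ] V) (T : V →L[ℂ] V)
    (hAS : A = (hadj S).comp (T.comp S))
    (hScpt : IsCompactOperator ⇑S) (hSinj : Function.Injective ⇑S)
    (hT : CoerciveOnRange S T)
    (lam : ℕ → ℝ) (e : ℕ → X) (l : ℕ → ADual X)
    (hspec : SpectralData A lam e l)
    (ℓ : ADual X) (xa : ℝ → X)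
    (hxa : ∀ α : ℝ, 0 < α →
      HasSum
        (fun n => (((lam n / (α * lam n + lam n ^ 2) : ℝ) : ℂ) *
          starRingEnd ℂ (dpair (e n) ℓ)) • e n) (xa α)) :
    IsRegSolution lam e (fun α t => t / (α + t)) ℓ xa ∧
      (ℓ ∈ Set.range ⇑(hadj S) ↔
        Filter.liminf (fun α => ENNReal.ofReal ((dpair (xa α) (A (xa α))).re))
          (𝓝[>] (0 : ℝ)) < ⊤) :=
  glsm_is_regularization_and_range_characterization_general A S T hAS hT lam e l hspec ℓ xa hxa
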